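/- arXiv:2212.10350 — 4 statements merged into one kernel-verified Lean document; each statement's English description precedes it below -/
import Mathlib

section
/- Let X = (X_1, …, X_d) be a positively associated random vector on a probability space and let X_0 be a real-valued random variable defined on the same probability space that is independent of X. Then the d-dimensional random vector X_0·𝟙 + X = (X_0 + X_1, …, X_0 + X_d) is positively associated. -/
open MeasureTheory

/-- A random vector `X` (with coordinates indexed by `ι`) is positively associated if
`Cov(f(X), g(X)) ≥ 0` for all bounded measurable coordinatewise-nondecreasing
functions `f, g`. -/
def PositivelyAssociated {Ω ι : Type*} [MeasurableSpace Ω]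
    (μ : Measure Ω) (X : Ω → (ι → ℝ)) : Prop :=
  ∀ f g : (ι → ℝ) → ℝ, Measurable f → Measurable g →
    (∃ C, ∀ x, |f x| ≤ C) → (∃ C, ∀ x, |g x| ≤ C) →
    Monotone f → Monotone g →
    0 ≤ (∫ ω, f (X ω) * g (X ω) ∂μ) - (∫ ω, f (X ω) ∂μ) * (∫ ω, g (X ω) ∂μ)

lemma integrable_of_bdd' {α : Type*} [MeasurableSpace α] {ν : Measure α}
    [IsFiniteMeasure ν] {h : α → ℝ} (hm : AEStronglyMeasurable h ν) {C : ℝ}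
    (hb : ∀ x, |h x| ≤ C) : Integrable h ν :=
  (integrable_const C).mono' hm (Filter.Eventually.of_forall fun x => by
    simpa using hb x)

lemma chebyshev_integral (ν : Measure ℝ) [IsProbabilityMeasure ν]
    (φ ψ : ℝ → ℝ) (hφm : Measurable φ) (hψm : Measurable ψ)
    {Cφ Cψ : ℝ} (hφb : ∀ x, |φ x| ≤ Cφ) (hψb : ∀ x, |ψ x| ≤ Cψ)
    (hφ : Monotone φ) (hψ : Monotone ψ) :
    (∫ x, φ x ∂ν) * (∫ x, ψ x ∂ν) ≤ ∫ x, φ x * ψ x ∂ν := by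
  have hCφ : 0 ≤ Cφ := le_trans (abs_nonneg _) (hφb 0)
  set π : Measure (ℝ × ℝ) := ν.prod ν with hπ
  have hbnd : ∀ p : ℝ × ℝ, ∀ a b : ℝ → ℝ, (∀ x, |a x| ≤ Cφ) → (∀ x, |b x| ≤ Cψ) →
      ∀ s t : ℝ, |a s * b t| ≤ Cφ * Cψ := fun p a b hab hbb s t => by
    rw [abs_mul]; exact mul_le_mul (hab s) (hbb t) (abs_nonneg _) hCφ
  have mk : ∀ {h : ℝ × ℝ → ℝ}, Measurable h → ∀ {C : ℝ}, (∀ p, |h p| ≤ C) →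
      Integrable h π := by
    intro h hm C hb; exact integrable_of_bdd' hm.aestronglyMeasurable hb
  have mφ1 := hφm.comp (measurable_fst : Measurable (Prod.fst : ℝ × ℝ → ℝ))
  have mφ2 := hφm.comp (measurable_snd : Measurable (Prod.snd : ℝ × ℝ → ℝ))
  have mψ1 := hψm.comp (measurable_fst : Measurable (Prod.fst : ℝ × ℝ → ℝ))
  have mψ2 := hψm.comp (measurable_snd : Measurable (Prod.snd : ℝ × ℝ → ℝ))
  have int1 : Integrable (fun p : ℝ × ℝ => φ p.1 * ψ p.1) π :=
    mk (mφ1.mul mψ1) (fun p => hbnd p φ ψ hφb hψb p.1 p.1)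
  have int2 : Integrable (fun p : ℝ × ℝ => φ p.2 * ψ p.2) π :=
    mk (mφ2.mul mψ2) (fun p => hbnd p φ ψ hφb hψb p.2 p.2)
  have int3 : Integrable (fun p : ℝ × ℝ => φ p.1 * ψ p.2) π :=
    mk (mφ1.mul mψ2) (fun p => hbnd p φ ψ hφb hψb p.1 p.2)
  have int4 : Integrable (fun p : ℝ × ℝ => φ p.2 * ψ p.1) π :=
    mk (mφ2.mul mψ1) (fun p => hbnd p φ ψ hφb hψb p.2 p.1)
  have key : 0 ≤ ∫ p : ℝ × ℝ, (φ p.1 - φ p.2) * (ψ p.1 - ψ p.2) ∂π := by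
    refine integral_nonneg fun p => ?_
    simp only [Pi.zero_apply]
    rcases le_total p.1 p.2 with h | h
    · nlinarith [hφ h, hψ h]
    · nlinarith [hφ h, hψ h]
  have expand : (fun p : ℝ × ℝ => (φ p.1 - φ p.2) * (ψ p.1 - ψ p.2)) =
      fun p : ℝ × ℝ => (φ p.1 * ψ p.1 + φ p.2 * ψ p.2) -
        (φ p.1 * ψ p.2 + φ p.2 * ψ p.1) := by
    funext p; ring
  rw [expand] at key
  have split := integral_sub (μ := π)
    (f := fun p : ℝ × ℝ => φ p.1 * ψ p.1 + φ p.2 * ψ p.2)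
    (g := fun p : ℝ × ℝ => φ p.1 * ψ p.2 + φ p.2 * ψ p.1)
    (int1.add int2) (int3.add int4)
  rw [integral_add int1 int2, integral_add int3 int4] at split
  rw [split] at key
  have e1 : ∫ p : ℝ × ℝ, φ p.1 * ψ p.2 ∂π = (∫ x, φ x ∂ν) * (∫ x, ψ x ∂ν) :=
    integral_prod_mul φ ψ
  have e2 : ∫ p : ℝ × ℝ, φ p.2 * ψ p.1 ∂π = (∫ x, φ x ∂ν) * (∫ x, ψ x ∂ν) := by
    rw [show (fun p : ℝ × ℝ => φ p.2 * ψ p.1) = fun p : ℝ × ℝ => ψ p.1 * φ p.2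
      from funext fun p => mul_comm _ _, integral_prod_mul ψ φ]; ring
  have e3 : ∫ p : ℝ × ℝ, φ p.1 * ψ p.1 ∂π = ∫ x, φ x * ψ x ∂ν := by
    have h := integral_prod_mul (μ := ν) (ν := ν) (fun x => φ x * ψ x) (fun _ => (1 : ℝ))
    simpa using h
  have e4 : ∫ p : ℝ × ℝ, φ p.2 * ψ p.2 ∂π = ∫ x, φ x * ψ x ∂ν := by
    have h := integral_prod_mul (μ := ν) (ν := ν) (fun _ => (1 : ℝ)) (fun x => φ x * ψ x)
    simpa using h
  rw [e1, e2, e3, e4] at key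
  linarith

/-- If `X` is a positively associated random vector and `X₀` is a real random
variable independent of `X`, then `X₀·𝟙 + X` is positively associated. -/
theorem latent_factor_associated
    {Ω : Type*} [MeasurableSpace Ω] (μ : Measure Ω) [IsProbabilityMeasure μ]
    {d : ℕ} (X : Ω → (Fin d → ℝ)) (X0 : Ω → ℝ)
    (hX : Measurable X) (hX0 : Measurable X0)
    (hIndep : ProbabilityTheory.IndepFun X0 X μ)
    (hAssoc : PositivelyAssociated μ X) :
    PositivelyAssociated μ (fun ω i => X0 ω + X ω i) := by
  intro f g hf hg hfb hgb hfm hgm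
  obtain ⟨Cf, hCf⟩ := hfb
  obtain ⟨Cg, hCg⟩ := hgb
  have hCf0 : 0 ≤ Cf := le_trans (abs_nonneg _) (hCf 0)
  have hCg0 : 0 ≤ Cg := le_trans (abs_nonneg _) (hCg 0)
  set ν : Measure ℝ := μ.map X0 with hν
  set ρ : Measure (Fin d → ℝ) := μ.map X with hρ
  haveI : IsProbabilityMeasure ν := Measure.isProbabilityMeasure_map hX0.aemeasurable
  haveI : IsProbabilityMeasure ρ := Measure.isProbabilityMeasure_map hX.aemeasurable
  -- the shift map and the lifted functions
  have hS : Measurable (fun p : ℝ × (Fin d → ℝ) => fun i => p.1 + p.2 i) :=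
    measurable_pi_lambda _ fun i =>
      measurable_fst.add ((measurable_pi_apply i).comp measurable_snd)
  set F : ℝ × (Fin d → ℝ) → ℝ := fun p => f (fun i => p.1 + p.2 i) with hFdef
  set G : ℝ × (Fin d → ℝ) → ℝ := fun p => g (fun i => p.1 + p.2 i) with hGdef
  have hFmeas : Measurable F := hf.comp hS
  have hGmeas : Measurable G := hg.comp hS
  have hFb : ∀ p, |F p| ≤ Cf := fun p => hCf _
  have hGb : ∀ p, |G p| ≤ Cg := fun p => hCg _
  -- independence: law of the pair is the product of the laws
  have hpair : Measurable (fun ω => (X0 ω, X ω)) := hX0.prodMk hX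
  have hmap : μ.map (fun ω => (X0 ω, X ω)) = ν.prod ρ :=
    (ProbabilityTheory.indepFun_iff_map_prod_eq_prod_map_map
      hX0.aemeasurable hX.aemeasurable).mp hIndep
  have transfer : ∀ (H : ℝ × (Fin d → ℝ) → ℝ), Measurable H →
      ∫ ω, H (X0 ω, X ω) ∂μ = ∫ p, H p ∂(ν.prod ρ) := by
    intro H hH
    rw [← hmap, integral_map hpair.aemeasurable hH.aestronglyMeasurable]
  -- the three μ-integrals in the goal, rewritten over ν.prod ρ
  have E1 : ∫ ω, f (fun i => X0 ω + X ω i) * g (fun i => X0 ω + X ω i) ∂μ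
      = ∫ p, F p * G p ∂(ν.prod ρ) := transfer (fun p => F p * G p) (hFmeas.mul hGmeas)
  have E2 : ∫ ω, f (fun i => X0 ω + X ω i) ∂μ = ∫ p, F p ∂(ν.prod ρ) :=
    transfer F hFmeas
  have E3 : ∫ ω, g (fun i => X0 ω + X ω i) ∂μ = ∫ p, G p ∂(ν.prod ρ) :=
    transfer G hGmeas
  -- integrability on the product
  have intFG : Integrable (fun p => F p * G p) (ν.prod ρ) :=
    integrable_of_bdd' (hFmeas.mul hGmeas).aestronglyMeasurable
      (C := Cf * Cg) (fun p => by
        rw [abs_mul]; exact mul_le_mul (hFb p) (hGb p) (abs_nonneg _) hCf0)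
  have intF : Integrable F (ν.prod ρ) :=
    integrable_of_bdd' hFmeas.aestronglyMeasurable hFb
  have intG : Integrable G (ν.prod ρ) :=
    integrable_of_bdd' hGmeas.aestronglyMeasurable hGb
  -- marginal functions
  set φ : ℝ → ℝ := fun t => ∫ x, F (t, x) ∂ρ with hφdef
  set ψ : ℝ → ℝ := fun t => ∫ x, G (t, x) ∂ρ with hψdef
  set A : ℝ → ℝ := fun t => ∫ x, F (t, x) * G (t, x) ∂ρ with hAdef
  -- Fubini
  have FB1 : ∫ p, F p * G p ∂(ν.prod ρ) = ∫ t, A t ∂ν := integral_prod _ intFG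
  have FB2 : ∫ p, F p ∂(ν.prod ρ) = ∫ t, φ t ∂ν := integral_prod _ intF
  have FB3 : ∫ p, G p ∂(ν.prod ρ) = ∫ t, ψ t ∂ν := integral_prod _ intG
  -- measurability of the marginals
  have hφmeas : Measurable φ :=
    hFmeas.stronglyMeasurable.integral_prod_right'.measurable
  have hψmeas : Measurable ψ :=
    hGmeas.stronglyMeasurable.integral_prod_right'.measurable
  have hAmeas : Measurable A :=
    (hFmeas.mul hGmeas).stronglyMeasurable.integral_prod_right'.measurable
  -- bounds on the marginals
  have bound : ∀ (H : ℝ × (Fin d → ℝ) → ℝ) (C : ℝ), (∀ p, |H p| ≤ C) →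
      ∀ t, |∫ x, H (t, x) ∂ρ| ≤ C := by
    intro H C hb t
    have := norm_integral_le_of_norm_le_const (μ := ρ)
      (f := fun x => H (t, x)) (C := C) (Filter.Eventually.of_forall fun x => by
        simpa using hb (t, x))
    simpa using this
  have hφb : ∀ t, |φ t| ≤ Cf := bound F Cf hFb
  have hψb : ∀ t, |ψ t| ≤ Cg := bound G Cg hGb
  -- sectionwise integrability and monotonicity
  have sectInt : ∀ (H : ℝ × (Fin d → ℝ) → ℝ), Measurable H → ∀ (C : ℝ),
      (∀ p, |H p| ≤ C) → ∀ t, Integrable (fun x => H (t, x)) ρ := by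
    intro H hH C hb t
    exact integrable_of_bdd' (hH.comp (measurable_const.prodMk measurable_id)
      ).aestronglyMeasurable (fun x => hb (t, x))
  have hφmono : Monotone φ := by
    intro s t hst
    refine integral_mono (sectInt F hFmeas Cf hFb s) (sectInt F hFmeas Cf hFb t)
      fun x => hfm fun i => by simpa using add_le_add_right hst (x i)
  have hψmono : Monotone ψ := by
    intro s t hst
    refine integral_mono (sectInt G hGmeas Cg hGb s) (sectInt G hGmeas Cg hGb t)
      fun x => hgm fun i => by simpa using add_le_add_right hst (x i)
  -- pointwise positive association from hAssoc
  have hpw : ∀ t, φ t * ψ t ≤ A t := by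
    intro t
    have hmt : Measurable (fun x : Fin d → ℝ => (fun i => t + x i)) :=
      measurable_pi_lambda _ fun i => measurable_const.add (measurable_pi_apply i)
    have h := hAssoc (fun x => f (fun i => t + x i)) (fun x => g (fun i => t + x i))
      (hf.comp hmt) (hg.comp hmt) ⟨Cf, fun x => hCf _⟩ ⟨Cg, fun x => hCg _⟩
      (fun x y hxy => hfm fun i => by simpa using hxy i)
      (fun x y hxy => hgm fun i => by simpa using hxy i)
    have m1 : ∫ ω, f (fun i => t + X ω i) * g (fun i => t + X ω i) ∂μ = A t :=
      (integral_map (f := fun x : Fin d → ℝ =>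
          f (fun i => t + x i) * g (fun i => t + x i)) hX.aemeasurable
        (((hf.comp hmt).mul (hg.comp hmt)).aestronglyMeasurable)).symm
    have m2 : ∫ ω, f (fun i => t + X ω i) ∂μ = φ t :=
      (integral_map (f := fun x : Fin d → ℝ => f (fun i => t + x i))
        hX.aemeasurable (hf.comp hmt).aestronglyMeasurable).symm
    have m3 : ∫ ω, g (fun i => t + X ω i) ∂μ = ψ t :=
      (integral_map (f := fun x : Fin d → ℝ => g (fun i => t + x i))
        hX.aemeasurable (hg.comp hmt).aestronglyMeasurable).symm
    rw [m1, m2, m3] at h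
    linarith
  -- integrability over ν
  have intA : Integrable A ν :=
    integrable_of_bdd' hAmeas.aestronglyMeasurable
      (bound _ (Cf * Cg) (fun p => by
        rw [abs_mul]; exact mul_le_mul (hFb p) (hGb p) (abs_nonneg _) hCf0))
  have intφψ : Integrable (fun t => φ t * ψ t) ν :=
    integrable_of_bdd' (hφmeas.mul hψmeas).aestronglyMeasurable
      (C := Cf * Cg) (fun t => by
        rw [abs_mul]; exact mul_le_mul (hφb t) (hψb t) (abs_nonneg _) hCf0)
  -- assemble
  have step1 : 0 ≤ ∫ t, (A t - φ t * ψ t) ∂ν :=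
    integral_nonneg fun t => sub_nonneg.mpr (hpw t)
  rw [integral_sub intA intφψ] at step1
  have cheb : (∫ t, φ t ∂ν) * (∫ t, ψ t ∂ν) ≤ ∫ t, φ t * ψ t ∂ν :=
    chebyshev_integral ν φ ψ hφmeas hψmeas hφb hψb hφmono hψmono
  rw [E1, E2, E3, FB1, FB2, FB3]
  linarith
end

section
/- Let G be a tree on the vertex set {1, …, d}, fix a vertex k, let (W_e)_{e ∈ E(G)} be mutually independent real-valued random variables indexed by the edges of G, and let E be a standard exponential random variable (rate 1) independent of (W_e)_{e ∈ E(G)}. Define the d-dimensional random vector Y by Y_i = E + ∑_{e ∈ ph(ik)} W_e, where ph(ik) denotes the edge set of the unique path in G between i and k (so Y_k = E). Then Y is positively associated. -/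
/-!
Increasing functions of independent random variables are associated. For one real variable this
is Chebyshev's integral inequality; association passes to product measures by conditioning on one
factor, and to images under measurable monotone maps by composition. Each `Y i` is `E` plus the sum
of the `W e` along a path, so `Y` is a coordinatewise nondecreasing function of the independent
family `(E, (W e)_e)`.
-/

open MeasureTheory ProbabilityTheory

lemma abs_mul_le_of_abs_le {a b A B : ℝ} (ha : |a| ≤ A) (hb : |b| ≤ B) : |a * b| ≤ A * B := by
  rw [abs_mul]; exact mul_le_mul ha hb (abs_nonneg _) ((abs_nonneg _).trans ha)

namespace MeasureTheory

variable {α β : Type*} [MeasurableSpace α] [MeasurableSpace β]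

lemma integrable_of_abs_le {Q : Measure α} [IsFiniteMeasure Q] {f : α → ℝ}
    (hf : Measurable f) {C : ℝ} (hC : ∀ x, |f x| ≤ C) : Integrable f Q :=
  .of_bound hf.aestronglyMeasurable C (.of_forall fun x => (Real.norm_eq_abs _).trans_le (hC x))

lemma abs_integral_le_of_abs_le {Q : Measure α} [IsProbabilityMeasure Q] {f : α → ℝ}
    {C : ℝ} (hC : ∀ x, |f x| ≤ C) : |∫ x, f x ∂Q| ≤ C := by
  simpa using norm_integral_le_of_norm_le_const (μ := Q)
    (.of_forall fun x => (Real.norm_eq_abs _).trans_le (hC x))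

namespace Measure

def IsAssociated [Preorder α] (Q : Measure α) : Prop :=
  ∀ f g : α → ℝ, Measurable f → Measurable g →
    (∃ C, ∀ x, |f x| ≤ C) → (∃ C, ∀ x, |g x| ≤ C) →
    Monotone f → Monotone g →
    (∫ x, f x ∂Q) * (∫ x, g x ∂Q) ≤ ∫ x, f x * g x ∂Q

theorem isAssociated_of_subsingleton [Preorder α] [Subsingleton α] (Q : Measure α)
    [IsProbabilityMeasure Q] : Q.IsAssociated := by
  intro f g _ _ _ _ _ _
  obtain ⟨x⟩ := nonempty_of_isProbabilityMeasure Q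
  have hconst : ∀ h : α → ℝ, h = fun _ => h x := fun h =>
    funext fun y => congrArg h (Subsingleton.elim y x)
  rw [hconst f, hconst g]
  simp

-- Chebyshev's trick: `(f x - f y) * (g x - g y) ≥ 0` integrates over `Q ⊗ Q` to twice the
-- covariance.
theorem isAssociated_of_linearOrder [LinearOrder α] (Q : Measure α) [IsProbabilityMeasure Q] :
    Q.IsAssociated := by
  intro f g hf hg ⟨Cf, hCf⟩ ⟨Cg, hCg⟩ hfm hgm
  have hfi : Integrable f Q := integrable_of_abs_le hf hCf
  have hgi : Integrable g Q := integrable_of_abs_le hg hCg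
  have hfgi : Integrable (fun x => f x * g x) Q :=
    integrable_of_abs_le (hf.mul hg) fun x => abs_mul_le_of_abs_le (hCf x) (hCg x)
  have hcomonotone : ∀ z : α × α, 0 ≤ (f z.1 - f z.2) * (g z.1 - g z.2) := fun z => by
    rcases le_total z.1 z.2 with h | h
    · exact mul_nonneg_of_nonpos_of_nonpos (sub_nonpos.2 (hfm h)) (sub_nonpos.2 (hgm h))
    · exact mul_nonneg (sub_nonneg.2 (hfm h)) (sub_nonneg.2 (hgm h))
  have h11 : Integrable (fun z : α × α => f z.1 * g z.1) (Q.prod Q) := hfgi.comp_fst Q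
  have h22 : Integrable (fun z : α × α => f z.2 * g z.2) (Q.prod Q) := hfgi.comp_snd Q
  have h12 : Integrable (fun z : α × α => f z.1 * g z.2) (Q.prod Q) := hfi.mul_prod hgi
  have h21 : Integrable (fun z : α × α => g z.1 * f z.2) (Q.prod Q) := hgi.mul_prod hfi
  have hsymm : ∫ z, (f z.1 - f z.2) * (g z.1 - g z.2) ∂(Q.prod Q) =
      2 * ((∫ x, f x * g x ∂Q) - (∫ x, f x ∂Q) * ∫ x, g x ∂Q) := by
    have hexpand : ∀ z : α × α, (f z.1 - f z.2) * (g z.1 - g z.2) =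
        (f z.1 * g z.1 + f z.2 * g z.2) - (f z.1 * g z.2 + g z.1 * f z.2) := fun z => by ring
    simp_rw [hexpand]
    rw [integral_sub (f := fun z : α × α => f z.1 * g z.1 + f z.2 * g z.2)
        (g := fun z : α × α => f z.1 * g z.2 + g z.1 * f z.2) (h11.add h22) (h12.add h21),
      integral_add h11 h22, integral_add h12 h21, integral_fun_fst (fun x => f x * g x),
      integral_fun_snd (fun x => f x * g x), integral_prod_mul, integral_prod_mul]
    simp only [probReal_univ, one_smul]
    ring
  have hnonneg : 0 ≤ ∫ z, (f z.1 - f z.2) * (g z.1 - g z.2) ∂(Q.prod Q) :=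
    integral_nonneg hcomonotone
  linarith

theorem IsAssociated.map [Preorder α] [Preorder β] {Q : Measure α} (hQ : Q.IsAssociated)
    {φ : α → β} (hφ : Measurable φ) (hmono : Monotone φ) : (Q.map φ).IsAssociated := by
  intro f g hf hg ⟨Cf, hCf⟩ ⟨Cg, hCg⟩ hfm hgm
  rw [integral_map hφ.aemeasurable hf.aestronglyMeasurable,
    integral_map hφ.aemeasurable hg.aestronglyMeasurable,
    integral_map (f := fun x => f x * g x) hφ.aemeasurable (hf.mul hg).aestronglyMeasurable]
  exact hQ (f ∘ φ) (g ∘ φ) (hf.comp hφ) (hg.comp hφ) ⟨Cf, fun x => hCf _⟩ ⟨Cg, fun x => hCg _⟩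
    (hfm.comp hmono) (hgm.comp hmono)

lemma monotone_integral_prodMk_left [Preorder α] [Preorder β] {Q : Measure β}
    [IsFiniteMeasure Q] {f : α × β → ℝ} (hf : Measurable f) {C : ℝ} (hC : ∀ z, |f z| ≤ C)
    (hmono : Monotone f) :
    Monotone fun t => ∫ y, f (t, y) ∂Q := fun _ _ h =>
  integral_mono (integrable_of_abs_le (hf.comp measurable_prodMk_left) fun _ => hC _)
    (integrable_of_abs_le (hf.comp measurable_prodMk_left) fun _ => hC _)
    fun _ => hmono ⟨h, le_rfl⟩

-- Condition on the first coordinate: `Q` correlates the sections, `P` their integrals.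
theorem IsAssociated.prod [Preorder α] [Preorder β] {P : Measure α} {Q : Measure β}
    [IsProbabilityMeasure P] [IsProbabilityMeasure Q] (hP : P.IsAssociated)
    (hQ : Q.IsAssociated) : (P.prod Q).IsAssociated := by
  intro f g hf hg ⟨Cf, hCf⟩ ⟨Cg, hCg⟩ hfm hgm
  have hfgi : Integrable (fun z => f z * g z) (P.prod Q) :=
    integrable_of_abs_le (hf.mul hg) fun z => abs_mul_le_of_abs_le (hCf z) (hCg z)
  have hFm : Measurable fun t => ∫ y, f (t, y) ∂Q :=
    hf.stronglyMeasurable.integral_prod_right'.measurable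
  have hGm : Measurable fun t => ∫ y, g (t, y) ∂Q :=
    hg.stronglyMeasurable.integral_prod_right'.measurable
  have hFC : ∀ t, |∫ y, f (t, y) ∂Q| ≤ Cf := fun t => abs_integral_le_of_abs_le fun _ => hCf _
  have hGC : ∀ t, |∫ y, g (t, y) ∂Q| ≤ Cg := fun t => abs_integral_le_of_abs_le fun _ => hCg _
  rw [integral_prod f (integrable_of_abs_le hf hCf), integral_prod g (integrable_of_abs_le hg hCg),
    integral_prod _ hfgi]
  calc (∫ t, ∫ y, f (t, y) ∂Q ∂P) * (∫ t, ∫ y, g (t, y) ∂Q ∂P)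
      ≤ ∫ t, (∫ y, f (t, y) ∂Q) * (∫ y, g (t, y) ∂Q) ∂P :=
        hP _ _ hFm hGm ⟨Cf, hFC⟩ ⟨Cg, hGC⟩ (monotone_integral_prodMk_left hf hCf hfm)
          (monotone_integral_prodMk_left hg hCg hgm)
    _ ≤ ∫ t, ∫ y, f (t, y) * g (t, y) ∂Q ∂P :=
        integral_mono
          (integrable_of_abs_le (hFm.mul hGm) fun t => abs_mul_le_of_abs_le (hFC t) (hGC t))
          hfgi.integral_prod_left fun t =>
            hQ _ _ (hf.comp measurable_prodMk_left) (hg.comp measurable_prodMk_left)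
              ⟨Cf, fun _ => hCf _⟩ ⟨Cg, fun _ => hCg _⟩ (fun _ _ h => hfm ⟨le_rfl, h⟩)
              (fun _ _ h => hgm ⟨le_rfl, h⟩)

theorem isAssociated_pi_fin : ∀ {n : ℕ} {α : Fin n → Type*} [∀ i, MeasurableSpace (α i)]
    [∀ i, Preorder (α i)] (ν : ∀ i, Measure (α i)) [∀ i, IsProbabilityMeasure (ν i)],
    (∀ i, (ν i).IsAssociated) → (Measure.pi ν).IsAssociated
  | 0, _, _, _, _, _, _ => isAssociated_of_subsingleton _
  | n + 1, α, _, _, ν, _, hν => by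
    rw [← (measurePreserving_piFinSuccAbove ν 0).symm.map_eq]
    refine ((hν 0).prod (isAssociated_pi_fin _ fun j => hν _)).map
      (MeasurableEquiv.measurable _) ?_
    rintro ⟨t, y⟩ ⟨t', y'⟩ ⟨ht, hy⟩
    show Fin.insertNth 0 t y ≤ Fin.insertNth 0 t' y'
    refine Fin.insertNth_le_iff.2 ⟨?_, fun j => ?_⟩
    · rwa [Fin.insertNth_apply_same]
    · simpa only [Fin.insertNth_apply_succAbove] using hy j

theorem isAssociated_pi {ι : Type*} [Fintype ι] {α : ι → Type*} [∀ i, MeasurableSpace (α i)]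
    [∀ i, Preorder (α i)] (ν : ∀ i, Measure (α i)) [∀ i, IsProbabilityMeasure (ν i)]
    (hν : ∀ i, (ν i).IsAssociated) : (Measure.pi ν).IsAssociated := by
  let e := (Fintype.equivFin ι).symm
  rw [← (measurePreserving_piCongrLeft ν e).map_eq]
  refine (isAssociated_pi_fin _ fun i => hν (e i)).map (MeasurableEquiv.measurable _)
    fun x y h i => ?_
  obtain ⟨j, rfl⟩ := e.surjective i
  simpa [MeasurableEquiv.coe_piCongrLeft, Equiv.piCongrLeft_apply_apply] using h j

end Measure
end MeasureTheory

namespace ProbabilityTheory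

variable {Ω : Type*} [MeasurableSpace Ω] {μ : Measure Ω} [IsProbabilityMeasure μ]

theorem iIndepFun.isAssociated_map {ι : Type*} [Fintype ι] {β : ι → Type*}
    [∀ i, MeasurableSpace (β i)] [∀ i, Preorder (β i)] {X : ∀ i, Ω → β i}
    (hX : ∀ i, AEMeasurable (X i) μ) (hindep : iIndepFun X μ)
    (hlaw : ∀ i, (μ.map (X i)).IsAssociated) : (μ.map fun ω i => X i ω).IsAssociated := by
  have := fun i => Measure.isProbabilityMeasure_map (μ := μ) (hX i)
  rw [hindep.map_fun_eq_pi_map hX]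
  exact Measure.isAssociated_pi _ hlaw

theorem IndepFun.isAssociated_map_prod {β γ : Type*} [MeasurableSpace β] [MeasurableSpace γ]
    [Preorder β] [Preorder γ] {X : Ω → β} {Z : Ω → γ} (hX : AEMeasurable X μ)
    (hZ : AEMeasurable Z μ) (hindep : IndepFun X Z μ) (hXlaw : (μ.map X).IsAssociated)
    (hZlaw : (μ.map Z).IsAssociated) : (μ.map fun ω => (X ω, Z ω)).IsAssociated := by
  have := Measure.isProbabilityMeasure_map (μ := μ) hX
  have := Measure.isProbabilityMeasure_map (μ := μ) hZ
  rw [hindep.map_prod_eq_prod_map_map hX hZ]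
  exact hXlaw.prod hZlaw

end ProbabilityTheory

theorem positivelyAssociated_of_isAssociated_map {Ω ι : Type*} [MeasurableSpace Ω]
    {μ : Measure Ω} {X : Ω → ι → ℝ} (hX : AEMeasurable X μ) (h : (μ.map X).IsAssociated) :
    PositivelyAssociated μ X := by
  intro f g hf hg hfC hgC hfm hgm
  rw [sub_nonneg, ← integral_map hX hf.aestronglyMeasurable,
    ← integral_map hX hg.aestronglyMeasurable,
    ← integral_map (f := fun x => f x * g x) hX (hf.mul hg).aestronglyMeasurable]
  exact h f g hf hg hfC hgC hfm hgm

theorem tree_model_associated_general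
    {Ω : Type*} [MeasurableSpace Ω] (μ : Measure Ω) [IsProbabilityMeasure μ]
    {d : ℕ} (G : SimpleGraph (Fin d)) (k : Fin d)
    (W : Sym2 (Fin d) → Ω → ℝ) (hWmeas : ∀ e, Measurable (W e))
    (hWindep : ProbabilityTheory.iIndepFun
      (fun e : G.edgeSet => W (e : Sym2 (Fin d))) μ)
    (E : Ω → ℝ) (hEmeas : Measurable E)
    (hEindep : ProbabilityTheory.IndepFun E
      (fun ω => fun e : G.edgeSet => W (e : Sym2 (Fin d)) ω) μ)
    (p : ∀ i : Fin d, G.Path i k)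
    (Y : Ω → Fin d → ℝ)
    (hY : ∀ ω i, Y ω i = E ω + (((p i : G.Walk i k).edges.map (fun e => W e ω)).sum)) :
    PositivelyAssociated μ Y := by
  have : Fintype G.edgeSet := Fintype.ofFinite _
  let path (i : Fin d) : List G.edgeSet := (p i : G.Walk i k).edges.pmap Subtype.mk
    fun _ he => (p i : G.Walk i k).edges_subset_edgeSet he
  let T (z : ℝ × (G.edgeSet → ℝ)) (i : Fin d) : ℝ := z.1 + ((path i).map z.2).sum
  have hT : Monotone T := fun z z' hz i =>
    add_le_add hz.1 (List.sum_le_sum fun e _ => hz.2 e)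
  have hTm : Measurable T := by fun_prop
  have hWm : Measurable fun ω (e : G.edgeSet) => W e ω :=
    measurable_pi_lambda _ fun e => hWmeas e
  have hV : Measurable fun ω => (E ω, fun e : G.edgeSet => W e ω) := hEmeas.prodMk hWm
  have hYT : Y = T ∘ fun ω => (E ω, fun e : G.edgeSet => W e ω) := by
    ext ω i
    simp [hY, T, path, List.map_pmap]
  have := Measure.isProbabilityMeasure_map (μ := μ) hEmeas.aemeasurable
  have := fun e => Measure.isProbabilityMeasure_map (μ := μ) (hWmeas e).aemeasurable
  have hlaw := hEindep.isAssociated_map_prod hEmeas.aemeasurable hWm.aemeasurable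
    (Measure.isAssociated_of_linearOrder _)
    (hWindep.isAssociated_map (fun e => (hWmeas e).aemeasurable)
      fun e => Measure.isAssociated_of_linearOrder _)
  rw [hYT]
  refine positivelyAssociated_of_isAssociated_map (hTm.comp hV).aemeasurable ?_
  rw [← Measure.map_map hTm hV]
  exact hlaw.map hTm hT

/-- Extremal tree models are extremal associated: if `G` is a tree on `{1, …, d}`,
`(W_e)_{e ∈ E(G)}` are mutually independent real random variables, `E` is a standard
exponential random variable independent of `(W_e)`, and
`Y_i = E + ∑_{e ∈ ph(ik)} W_e` where `ph(ik)` is the unique path in `G` from `i`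
to the fixed vertex `k`, then `Y` is positively associated. -/
theorem tree_model_associated
    {Ω : Type*} [MeasurableSpace Ω] (μ : Measure Ω) [IsProbabilityMeasure μ]
    {d : ℕ} (G : SimpleGraph (Fin d)) (hG : G.IsTree) (k : Fin d)
    (W : Sym2 (Fin d) → Ω → ℝ) (hWmeas : ∀ e, Measurable (W e))
    (hWindep : ProbabilityTheory.iIndepFun
      (fun e : G.edgeSet => W (e : Sym2 (Fin d))) μ)
    (E : Ω → ℝ) (hEmeas : Measurable E)
    (hEexp : Measure.map E μ = ProbabilityTheory.expMeasure 1)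
    (hEindep : ProbabilityTheory.IndepFun E
      (fun ω => fun e : G.edgeSet => W (e : Sym2 (Fin d)) ω) μ)
    (p : ∀ i : Fin d, G.Path i k)
    (Y : Ω → Fin d → ℝ)
    (hY : ∀ ω i, Y ω i = E ω + (((p i : G.Walk i k).edges.map (fun e => W e ω)).sum)) :
    PositivelyAssociated μ Y :=
  tree_model_associated_general μ G k W hWmeas hWindep E hEmeas hEindep p Y hY
end

section
/- Let Γ be a symmetric d×d real matrix with zero diagonal and fix k ∈ {1, …, d}. Then the Farris transform Σ^{(k)} of Γ at k is positive definite if and only if Γ is strictly conditionally negative definite. -/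
/-!
Completing `y ∈ ℝ^{d∖k}` by the coordinate `-∑ y` at `k` identifies `ℝ^{d∖k}` with the
hyperplane `∑ x = 0`. For symmetric `Γ` with `Γ k k = 0`, expanding both quadratic forms in
`s = ∑ y` and `a = ∑ Γ_{ik} y_i` gives `xᵀΓx = yᵀΓ'y - 2sa` and `yᵀΣ^{(k)}y = sa - yᵀΓ'y/2`,
with `Γ'` the restriction of `Γ`; so `xᵀΓx = -2 yᵀΣ^{(k)}y`.
-/

open Matrix

/-- The Farris transform `Σ^{(k)}` of `Γ` at `k`,
`Σ^{(k)}_{ij} = (Γ_{ik} + Γ_{jk} − Γ_{ij})/2` for `i, j ≠ k`. -/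
noncomputable def farris {d : ℕ} (Γ : Matrix (Fin d) (Fin d) ℝ) (k : Fin d) :
    Matrix {i : Fin d // i ≠ k} {i : Fin d // i ≠ k} ℝ :=
  Matrix.of fun i j => (Γ (i : Fin d) k + Γ (j : Fin d) k - Γ (i : Fin d) (j : Fin d)) / 2

section extendByNegSum

variable {ι : Type*} [Fintype ι] [DecidableEq ι] (k : ι)

def extendByNegSum (y : {i // i ≠ k} → ℝ) : ι → ℝ :=
  fun i => if h : i = k then -∑ j, y j else y ⟨i, h⟩

@[simp]
theorem extendByNegSum_self (y : {i // i ≠ k} → ℝ) : extendByNegSum k y k = -∑ j, y j :=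
  dif_pos rfl

@[simp]
theorem extendByNegSum_coe (y : {i // i ≠ k} → ℝ) (i : {i // i ≠ k}) :
    extendByNegSum k y i = y i :=
  dif_neg i.2

theorem sum_extendByNegSum (y : {i // i ≠ k} → ℝ) : ∑ i, extendByNegSum k y i = 0 := by
  simp [Fintype.sum_eq_add_sum_subtype_ne _ k]

theorem extendByNegSum_restrict {x : ι → ℝ} (hx : ∑ i, x i = 0) :
    extendByNegSum k (fun i => x i) = x := by
  funext i
  by_cases h : i = k
  · subst h
    rw [Fintype.sum_eq_add_sum_subtype_ne _ i] at hx
    simp only [extendByNegSum_self]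
    linarith
  · exact extendByNegSum_coe k _ ⟨i, h⟩

@[simp]
theorem extendByNegSum_zero : extendByNegSum k 0 = (0 : ι → ℝ) := by
  funext i
  by_cases h : i = k <;> simp [extendByNegSum, h]

theorem extendByNegSum_injective : Function.Injective (extendByNegSum k) :=
  fun y z h => funext fun i => by simpa using congrFun h i

end extendByNegSum

theorem farris_isHermitian {d : ℕ} (k : Fin d) {Γ : Matrix (Fin d) (Fin d) ℝ}
    (hsym : Γ.IsSymm) :
    (farris Γ k).IsHermitian := by
  ext i j
  simp only [farris, conjTranspose_apply, of_apply, star_trivial, hsym.apply i j]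
  ring

theorem dotProduct_mulVec_extendByNegSum {d : ℕ} (k : Fin d) {Γ : Matrix (Fin d) (Fin d) ℝ}
    (hsym : Γ.IsSymm) (hk : Γ k k = 0) (y : {i // i ≠ k} → ℝ) :
    extendByNegSum k y ⬝ᵥ Γ *ᵥ extendByNegSum k y = -2 * (y ⬝ᵥ farris Γ k *ᵥ y) := by
  set s := ∑ j, y j with hs
  set a := ∑ i : {i // i ≠ k}, Γ i k * y i with ha
  set q := ∑ i : {i // i ≠ k}, y i * ∑ j : {i // i ≠ k}, Γ i j * y j with hq
  have hΓx (i : Fin d) :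
      (Γ *ᵥ extendByNegSum k y) i = Γ i k * -s + ∑ j : {i // i ≠ k}, Γ i j * y j := by
    simp [mulVec, dotProduct, Fintype.sum_eq_add_sum_subtype_ne _ k, ← hs]
  have lhs : extendByNegSum k y ⬝ᵥ Γ *ᵥ extendByNegSum k y = -2 * s * a + q := by
    have hka : ∑ j : {i // i ≠ k}, Γ k j * y j = a :=
      Finset.sum_congr rfl fun j _ => by rw [hsym.apply]
    simp only [dotProduct, Fintype.sum_eq_add_sum_subtype_ne _ k, hΓx, extendByNegSum_self,
      extendByNegSum_coe, hk, hka, ← hs, mul_add, Finset.sum_add_distrib, ← hq]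
    rw [Finset.sum_congr rfl fun i _ => show y i * (Γ i k * -s) = -s * (Γ i k * y i) by ring,
      ← Finset.mul_sum, ← ha]
    ring
  have rhs : y ⬝ᵥ farris Γ k *ᵥ y = s * a - q / 2 := by
    have hinner (i : {i // i ≠ k}) :
        (farris Γ k *ᵥ y) i = (Γ i k * s + a - ∑ j : {i // i ≠ k}, Γ i j * y j) / 2 := by
      simp only [mulVec, dotProduct, farris, of_apply, div_mul_eq_mul_div, ← Finset.sum_div,
        add_mul, sub_mul, Finset.sum_add_distrib, Finset.sum_sub_distrib, ← Finset.mul_sum,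
        ← hs, ← ha]
    simp only [dotProduct, hinner, mul_div_assoc', ← Finset.sum_div, mul_sub, mul_add,
      Finset.sum_sub_distrib, Finset.sum_add_distrib, ← hq]
    rw [Finset.sum_congr rfl fun i _ => show y i * (Γ i k * s) = s * (Γ i k * y i) by ring,
      ← Finset.mul_sum, ← Finset.sum_mul, ← ha, ← hs]
    ring
  rw [lhs, rhs]
  ring

/-- For a symmetric matrix `Γ` with zero diagonal, the Farris transform `Σ^{(k)}` is
positive definite if and only if `Γ` is strictly conditionally negative definite. -/
theorem farris_posDef_iff_scnd {d : ℕ} (k : Fin d) (Γ : Matrix (Fin d) (Fin d) ℝ)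
    (hsym : Γ.IsSymm) (hdiag : ∀ i, Γ i i = 0) :
    (farris Γ k).PosDef ↔
      ∀ x : Fin d → ℝ, x ≠ 0 → (∑ i, x i) = 0 → x ⬝ᵥ Γ.mulVec x < 0 := by
  have hquad := dotProduct_mulVec_extendByNegSum k hsym (hdiag k)
  simp only [posDef_iff_dotProduct_mulVec, farris_isHermitian k hsym, true_and, star_trivial]
  constructor
  · intro hpos x hx hsum
    have hy : (fun i : {i // i ≠ k} => x i) ≠ 0 := by
      rintro h
      rw [← extendByNegSum_restrict k hsum, h, extendByNegSum_zero] at hx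
      exact hx rfl
    rw [← extendByNegSum_restrict k hsum, hquad]
    linarith [hpos hy]
  · intro hneg y hy
    have hx : extendByNegSum k y ≠ 0 :=
      extendByNegSum_zero k ▸ (extendByNegSum_injective k).ne hy
    linarith [hquad y, hneg _ hx (sum_extendByNegSum k y)]
end

section
/- The function Q ↦ log τ(Q) is strictly concave on 𝒬: for all Q_1, Q_2 ∈ 𝒬 with Q_1 ≠ Q_2 and all t ∈ (0,1), log τ(tQ_1 + (1−t)Q_2) > t·log τ(Q_1) + (1−t)·log τ(Q_2). Moreover, 𝒬 is a convex set and τ(Q) > 0 for every Q ∈ 𝒬. -/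
open Matrix Finset

/-- `Θ(Q)`: `Θ(Q)_{ij} = −Q_{ij}` for `i ≠ j` and `Θ(Q)_{ii} = ∑_{j≠i} Q_{ij}`. -/
noncomputable def thetaOf {d : ℕ} (Q : Matrix (Fin d) (Fin d) ℝ) :
    Matrix (Fin d) (Fin d) ℝ :=
  Matrix.of fun i j => if i = j then ∑ l ∈ univ.filter (fun l => l ≠ i), Q i l else -Q i j

/-- Membership in `𝒬`: symmetric, zero diagonal, and `xᵀΘ(Q)x > 0` for every nonzero
`x` with `∑ᵢ xᵢ = 0`. -/
def memQ {d : ℕ} (Q : Matrix (Fin d) (Fin d) ℝ) : Prop :=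
  Q.IsSymm ∧ (∀ i, Q i i = 0) ∧
    ∀ x : Fin d → ℝ, x ≠ 0 → (∑ i, x i) = 0 → 0 < x ⬝ᵥ (thetaOf Q).mulVec x

/-- The centering matrix `P = I − (1/d)𝟙𝟙ᵀ`. -/
noncomputable def Pmat (d : ℕ) : Matrix (Fin d) (Fin d) ℝ :=
  1 - ((d : ℝ)⁻¹) • Matrix.of (fun _ _ : Fin d => (1 : ℝ))

/-- `S` is the matrix `Σ(Q)`: the unique symmetric matrix with `Σ(Q)𝟙 = 0` and
`Θ(Q)Σ(Q) = P`. -/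
def isSigmaOf {d : ℕ} (Q S : Matrix (Fin d) (Fin d) ℝ) : Prop :=
  S.IsSymm ∧ S.mulVec (fun _ => 1) = 0 ∧ thetaOf Q * S = Pmat d

/-- The variogram associated with `Σ`: `Γ_{ij} = Σ_{ii} + Σ_{jj} − 2Σ_{ij}`. -/
noncomputable def gammaOf {d : ℕ} (S : Matrix (Fin d) (Fin d) ℝ) :
    Matrix (Fin d) (Fin d) ℝ :=
  Matrix.of fun i j => S i i + S j j - 2 * S i j

/-- The inner product `⟨A, B⟩ = ∑_{i<j} A_{ij} B_{ij}` on symmetric matrices with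
zero diagonal. -/
noncomputable def sinner {d : ℕ} (A B : Matrix (Fin d) (Fin d) ℝ) : ℝ :=
  ∑ p ∈ univ.filter (fun p : Fin d × Fin d => p.1 < p.2), A p.1 p.2 * B p.1 p.2

open Classical in
/-- The spanning tree polynomial `τ(Q) = ∑_T ∏_{{i,j}∈T} Q_{ij}`, summed over all
spanning trees of the complete graph on `{1, …, d}`. -/
noncomputable def tau {d : ℕ} (Q : Matrix (Fin d) (Fin d) ℝ) : ℝ :=
  ∑ T ∈ (univ : Finset (SimpleGraph (Fin d))).filter (fun T => T.IsTree),
    ∏ p ∈ univ.filter (fun p : Fin d × Fin d => p.1 < p.2 ∧ T.Adj p.1 p.2), Q p.1 p.2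

/-- The Cayley–Menger matrix of `Γ`. -/
noncomputable def CM {d : ℕ} (Γ : Matrix (Fin d) (Fin d) ℝ) :
    Matrix (Fin (d + 1)) (Fin (d + 1)) ℝ :=
  Matrix.of fun a b =>
    if ha : (a : ℕ) < d then
      (if hb : (b : ℕ) < d then -Γ ⟨a, ha⟩ ⟨b, hb⟩ / 2 else 1)
    else (if (b : ℕ) < d then -1 else 0)

/-- Membership in the cone `𝒞^d` of symmetric matrices with zero diagonal that are
strictly conditionally negative definite. -/
def memC {d : ℕ} (Γ : Matrix (Fin d) (Fin d) ℝ) : Prop :=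
  Γ.IsSymm ∧ (∀ i, Γ i i = 0) ∧
    ∀ x : Fin d → ℝ, x ≠ 0 → (∑ i, x i) = 0 → x ⬝ᵥ Γ.mulVec x < 0

/-!
By Kirchhoff's matrix-tree theorem, `τ(Q)` is the determinant of `Θ(Q)` with its last row and
column deleted. Indeed, `Θ(Q) = Lᵀ diag(Q_{ij}) L` with `L` the signed incidence matrix of the
complete graph, so Cauchy–Binet expands the reduced determinant over sets of `d - 1` edges with
weights `det(L_S)²`; the reduced incidence matrix is totally unimodular, and `L_S` is nonsingular
exactly when the edges `S` connect all vertices, i.e. form a spanning tree.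

On `𝒬` this reduced matrix is positive definite, and it depends affinely and injectively on `Q`.
So strict concavity of `log τ` is strict concavity of `log det` on positive definite matrices,
which after a congruence by `A^{-1/2}` is strict concavity of `log` on the eigenvalues.
-/

lemma Option.exists_eq_some_iff_eq_some_succAbove {n : ℕ} (p : Option (Fin (n + 1)))
    (k : Fin (n + 1)) : ∃ p' : Option (Fin n), ∀ z, p' = some z ↔ p = some (k.succAbove z) := by
  rcases p with _ | a
  · exact ⟨none, by simp⟩
  by_cases hak : a = k
  · exact ⟨none, fun z => by simp [hak, (Fin.succAbove_ne k z).symm]⟩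
  · obtain ⟨z₀, rfl⟩ := Fin.exists_succAbove_eq hak
    exact ⟨some z₀, fun z => by simp⟩

namespace Matrix

variable {R : Type*} [CommRing R]

/-- `p` and `q` locate the entries `1` and `-1` of row `i`, if there are any. -/
theorem det_mem_range_signType_of_rows [IsDomain R] {n : ℕ} (A : Matrix (Fin n) (Fin n) R)
    (hA : ∀ i, ∃ p q : Option (Fin n), ∀ j,
      A i j = (if p = some j then 1 else 0) - (if q = some j then 1 else 0)) :
    A.det ∈ Set.range SignType.cast := by
  induction n with
  | zero => exact ⟨1, by simp⟩
  | succ n ih =>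
    choose p q hpq using hA
    have hentry : ∀ i j, A i j ∈ Set.range (SignType.cast : SignType → R) := by
      intro i j
      rw [hpq]
      split_ifs
      exacts [⟨0, by simp⟩, ⟨1, by simp⟩, ⟨-1, by simp⟩, ⟨0, by simp⟩]
    by_cases hsingle : ∃ i, p i = none ∨ q i = none
    · -- row `i` has at most one nonzero entry: expand along it
      obtain ⟨i, hi⟩ := hsingle
      obtain ⟨j, hj⟩ : ∃ j, ∀ j' ≠ j, A i j' = 0 := by
        refine ⟨((p i).or (q i)).getD 0, fun j' hj' => ?_⟩
        rcases hi with hi | hi <;> rcases hp : p i <;> rcases hq : q i <;> simp_all [eq_comm]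
      have hminor : (A.submatrix i.succAbove j.succAbove).det ∈ Set.range SignType.cast := by
        refine ih _ fun r => ?_
        obtain ⟨p', hp'⟩ := (p (i.succAbove r)).exists_eq_some_iff_eq_some_succAbove j
        obtain ⟨q', hq'⟩ := (q (i.succAbove r)).exists_eq_some_iff_eq_some_succAbove j
        exact ⟨p', q', fun z => by simp [hp', hq', hpq]⟩
      rw [det_succ_row A i, sum_eq_single j (fun j' _ hj' => by simp [hj j' hj']) (by simp)]
      obtain ⟨s, hs⟩ := hentry i j
      obtain ⟨s', hs'⟩ := hminor
      exact ⟨(-1) ^ (i + j : ℕ) * s * s', by simp [hs, hs']⟩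
    · -- every row has one `1` and one `-1`, so the rows sum to zero
      push Not at hsingle
      have hones : A *ᵥ (fun _ => 1) = 0 := by
        ext i
        obtain ⟨a, ha⟩ := Option.ne_none_iff_exists'.mp (hsingle i).1
        obtain ⟨b, hb⟩ := Option.ne_none_iff_exists'.mp (hsingle i).2
        simp [mulVec, dotProduct, hpq, ha, hb]
      have hdet : A.det = 0 :=
        exists_mulVec_eq_zero_iff.mp ⟨fun _ => 1, fun h => one_ne_zero (congrFun h 0), hones⟩
      exact ⟨0, by simp [hdet]⟩

theorem det_mul_eq_sum_fun {ι n : Type*} [Fintype ι] [Fintype n] [DecidableEq n]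
    (A : Matrix n ι R) (B : Matrix ι n R) :
    (A * B).det = ∑ r : n → ι, (∏ a, A a (r a)) * (B.submatrix r id).det := by
  have hrows : (A * B).det = (detRowAlternating : (n → R) [⋀^n]→ₗ[R] R).toMultilinearMap
      (fun a => ∑ k, A a k • B k) := by
    have : A * B = of fun a => ∑ k, A a k • B k := by
      ext a b
      simp [mul_apply]
    rw [this]
    rfl
  rw [hrows, MultilinearMap.map_sum]
  refine sum_congr rfl fun r _ => ?_
  rw [MultilinearMap.map_smul_univ]
  rfl

theorem det_mul_eq_sum_strictMono {ι : Type*} [Fintype ι] [LinearOrder ι] {m : ℕ}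
    (A : Matrix (Fin m) ι R) (B : Matrix ι (Fin m) R) :
    (A * B).det = ∑ f : Fin m → ι with StrictMono f,
      (A.submatrix id f).det * (B.submatrix f id).det := by
  have hinj : (A * B).det = ∑ r : Fin m → ι with r.Injective,
      (∏ a, A a (r a)) * (B.submatrix r id).det := by
    rw [det_mul_eq_sum_fun, sum_filter_of_ne]
    intro r _ hr
    by_contra hnot
    obtain ⟨a, b, hab, hne⟩ := Function.not_injective_iff.mp hnot
    exact hr (by rw [det_zero_of_row_eq hne (by ext; simp [hab]), mul_zero])
  have hperm : ∀ f : Fin m → ι, (A.submatrix id f).det * (B.submatrix f id).det =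
      ∑ σ : Equiv.Perm (Fin m), (∏ a, A a (f (σ a))) * (B.submatrix (f ∘ σ) id).det := by
    intro f
    rw [← det_transpose, det_apply', sum_mul]
    refine sum_congr rfl fun σ _ => ?_
    rw [show B.submatrix (f ∘ σ) id = (B.submatrix f id).submatrix σ id from rfl, det_permute]
    simp only [transpose_apply, submatrix_apply, id]
    ring
  rw [hinj, sum_congr rfl (fun f _ => hperm f), ← sum_product']
  -- an injective `r` factors uniquely as `f ∘ σ` with `f` strictly monotone: sort it
  refine (sum_nbij' (fun p => p.1 ∘ p.2) (fun r => (r ∘ Tuple.sort r, (Tuple.sort r)⁻¹))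
    ?_ ?_ ?_ ?_ ?_).symm
  · simp only [mem_product, mem_filter, mem_univ, true_and, and_true]
    intro p hp
    exact hp.injective.comp p.2.injective
  · simp only [mem_product, mem_filter, mem_univ, true_and, and_true]
    intro r hr
    exact (Tuple.monotone_sort r).strictMono_of_injective (hr.comp (Equiv.injective _))
  · simp only [mem_product, mem_filter, mem_univ, true_and, and_true]
    rintro ⟨f, σ⟩ hf
    have hsort : (f ∘ σ) ∘ Tuple.sort (f ∘ σ) = f := by
      rw [Tuple.comp_perm_comp_sort_eq_comp_sort, Tuple.sort_eq_refl_iff_monotone.mpr hf.monotone]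
      rfl
    refine Prod.ext hsort ?_
    have hid : σ * Tuple.sort (f ∘ σ) = 1 := Equiv.ext fun a => hf.injective (congrFun hsort a)
    exact inv_eq_of_mul_eq_one_left hid
  · intro r _
    simp [Function.comp_assoc]
  · intro p _
    rfl

lemma dotProduct_submatrix_castSucc_mulVec {m : ℕ} (M : Matrix (Fin (m + 1)) (Fin (m + 1)) R)
    (x : Fin m → R) :
    x ⬝ᵥ M.submatrix Fin.castSucc Fin.castSucc *ᵥ x =
      (Fin.snoc x 0 : Fin (m + 1) → R) ⬝ᵥ M *ᵥ Fin.snoc x 0 := by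
  simp [dotProduct, mulVec, Fin.sum_univ_castSucc]

lemma dotProduct_mulVec_sub_const {n : Type*} [Fintype n] {M : Matrix n n R}
    (hM : M *ᵥ (fun _ => 1) = 0) (hMt : (fun _ => 1) ᵥ* M = 0) (z : n → R) (c : R) :
    (z - fun _ => c) ⬝ᵥ M *ᵥ (z - fun _ => c) = z ⬝ᵥ M *ᵥ z := by
  have hc : (fun _ => c : n → R) = c • fun _ => 1 := by
    ext
    simp
  rw [hc, mulVec_sub, mulVec_smul, hM, smul_zero, sub_zero, sub_dotProduct, smul_dotProduct,
    dotProduct_mulVec (fun _ => 1), hMt, zero_dotProduct, smul_zero, sub_zero]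

theorem convex_setOf_posDef {n : Type*} [Fintype n] :
    Convex ℝ {A : Matrix n n ℝ | A.PosDef} := by
  intro A hA B hB a b ha hb hab
  rcases ha.eq_or_lt with rfl | ha
  · simpa [show b = 1 by linarith] using hB
  · exact (hA.smul ha).add_posSemidef (hB.posSemidef.smul hb)

variable {n : Type*} [Fintype n] [DecidableEq n]

theorem PosDef.one_sub_mul_log_det_lt {M : Matrix n n ℝ} (hM : M.PosDef) (hM1 : M ≠ 1)
    {t : ℝ} (ht0 : 0 < t) (ht1 : t < 1) :
    (1 - t) * Real.log M.det < Real.log (t • 1 + (1 - t) • M).det := by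
  have hlog : ∀ x : ℝ, 0 < x → x ≠ 1 → (1 - t) * Real.log x < Real.log (t + (1 - t) * x) :=
    fun x hx hx1 => by
      simpa using strictConcaveOn_log_Ioi.2 (Set.mem_Ioi.mpr one_pos) (Set.mem_Ioi.mpr hx)
        (Ne.symm hx1) ht0 (show 0 < 1 - t by linarith) (by ring)
  set μ := hM.1.eigenvalues
  set conj := Unitary.conjStarAlgAut ℝ (Matrix n n ℝ) hM.1.eigenvectorUnitary
  have hdet : ∀ v : n → ℝ, (conj (diagonal v)).det = ∏ i, v i := by
    intro v
    rw [Unitary.conjStarAlgAut_apply, det_mul, det_mul, det_diagonal, mul_right_comm, ← det_mul,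
      Unitary.mul_star_self_of_mem (SetLike.coe_mem _), det_one, one_mul]
  have hM' : M = conj (diagonal μ) := hM.1.spectral_theorem
  have hcomb : t • 1 + (1 - t) • M = conj (diagonal fun i => t + (1 - t) * μ i) := by
    rw [hM', ← map_one conj, ← map_smul, ← map_smul, ← map_add]
    congr 1
    ext i j
    by_cases h : i = j <;> simp [h]
  have hμ : ∀ i, 0 < μ i := hM.eigenvalues_pos
  obtain ⟨i₀, hi₀⟩ : ∃ i, μ i ≠ 1 := by
    by_contra! h
    exact hM1 (by rw [hM', show μ = fun _ => 1 from funext h, diagonal_one, map_one])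
  rw [hcomb, hdet, hM', hdet, Real.log_prod (fun i _ => (hμ i).ne'),
    Real.log_prod (fun i _ => by nlinarith [hμ i]), mul_sum]
  refine sum_lt_sum (fun i _ => ?_) ⟨i₀, mem_univ _, hlog _ (hμ i₀) hi₀⟩
  by_cases h : μ i = 1
  · simp [h]
  · exact (hlog _ (hμ i) h).le

open scoped MatrixOrder in
theorem strictConcaveOn_log_det :
    StrictConcaveOn ℝ {A : Matrix n n ℝ | A.PosDef} fun A => Real.log A.det := by
  refine ⟨convex_setOf_posDef, fun A hA B hB hAB a b ha hb hab => ?_⟩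
  obtain rfl : b = 1 - a := by linarith
  -- the congruence `X ↦ R⁻¹ X R⁻¹` with `R = A^{1/2}` reduces the claim to `A = 1`
  set R := CFC.sqrt A
  have hRR : R * R = A := CFC.sqrt_mul_sqrt_self A hA.posSemidef.nonneg
  have hRstar : star R = R := (CFC.sqrt_nonneg A).isSelfAdjoint
  have hRdet : IsUnit R.det := by
    refine isUnit_iff_ne_zero.mpr fun h => ?_
    have := hA.det_pos
    rw [← hRR, det_mul, h, mul_zero] at this
    exact lt_irrefl 0 this
  set M := R⁻¹ * B * R⁻¹
  have hM : M.PosDef := by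
    have hstar : star R⁻¹ = R⁻¹ := by
      rw [star_eq_conjTranspose, conjTranspose_nonsing_inv, ← star_eq_conjTranspose, hRstar]
    have := (isUnit_nonsing_inv_iff.mpr ((isUnit_iff_isUnit_det R).mpr hRdet)
      ).posDef_star_left_conjugate_iff.mpr (show B.PosDef from hB)
    rwa [hstar] at this
  have hB' : B = R * M * R := by
    simp only [M, ← Matrix.mul_assoc, mul_nonsing_inv _ hRdet, Matrix.one_mul]
    rw [Matrix.mul_assoc, nonsing_inv_mul _ hRdet, Matrix.mul_one]
  have hM1 : M ≠ 1 := fun h => hAB (by rw [hB', h, Matrix.mul_one, hRR])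
  have hcomb : a • A + (1 - a) • B = R * (a • 1 + (1 - a) • M) * R := by
    rw [hB', ← hRR]
    simp only [Matrix.mul_add, Matrix.add_mul, Matrix.mul_smul, Matrix.smul_mul, Matrix.mul_one]
  have hC : (a • 1 + (1 - a) • M).PosDef :=
    convex_setOf_posDef PosDef.one hM ha.le hb.le (by ring)
  have hlog : ∀ X : Matrix n n ℝ, X.PosDef →
      Real.log (R * X * R).det = Real.log (R * R).det + Real.log X.det := by
    intro X hX
    rw [det_mul, det_mul, det_mul, mul_right_comm, Real.log_mul (mul_self_ne_zero.mpr hRdet.ne_zero)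
      hX.det_pos.ne']
  have key := hM.one_sub_mul_log_det_lt hM1 ha (by linarith : a < 1)
  simp only [smul_eq_mul]
  rw [hcomb, hB', hlog M hM, hlog _ hC, ← hRR]
  linarith

end Matrix

lemma SimpleGraph.Reachable.apply_eq_of_forall_adj {V α : Type*} {G : SimpleGraph V}
    {x : V → α} (hx : ∀ u v, G.Adj u v → x u = x v) {u v : V} (h : G.Reachable u v) :
    x u = x v := by
  obtain ⟨w⟩ := h
  induction w with
  | nil => rfl
  | cons hadj _ ih => exact (hx _ _ hadj).trans ih

lemma two_mul_sum_sum_ite_lt {α R : Type*} [Fintype α] [LinearOrder α] [CommSemiring R]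
    (g : α → α → R) (hg : ∀ x y, g x y = g y x) (hd : ∀ x, g x x = 0) :
    2 * ∑ x, ∑ y, (if x < y then g x y else 0) = ∑ x, ∑ y, g x y := by
  have hsplit : ∀ x y, g x y = (if x < y then g x y else 0) + (if y < x then g y x else 0) := by
    intro x y
    rcases lt_trichotomy x y with h | rfl | h
    · simp [h, h.not_gt]
    · simp [hd]
    · simp [h, h.not_gt, hg x y]
  rw [sum_congr rfl fun x _ => sum_congr rfl fun y _ => hsplit x y]
  simp only [sum_add_distrib]
  rw [sum_comm (f := fun x y => if y < x then g y x else 0)]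
  ring

def incidence (V : Type*) [DecidableEq V] : Matrix (V × V) V ℝ :=
  of fun p v => (if v = p.1 then 1 else 0) - (if v = p.2 then 1 else 0)

-- Each edge `{i, j}` of the complete graph is the pair `(i, j)` with `i < j`; other pairs
-- get weight `0`.
def edgeWeight {V : Type*} [LinearOrder V] (Q : Matrix V V ℝ) (p : V × V) : ℝ :=
  if p.1 < p.2 then Q p.1 p.2 else 0

def edgeGraph {V ι : Type*} (f : ι → V × V) : SimpleGraph V :=
  SimpleGraph.fromEdgeSet (Set.range fun i => s((f i).1, (f i).2))

open Classical in
noncomputable def edgePairs {d : ℕ} (G : SimpleGraph (Fin d)) : Finset (Fin d × Fin d) :=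
  univ.filter fun p => p.1 < p.2 ∧ G.Adj p.1 p.2

def reducedIncidence (m : ℕ) : Matrix (Fin (m + 1) × Fin (m + 1)) (Fin m) ℝ :=
  (incidence (Fin (m + 1))).submatrix id Fin.castSucc

noncomputable def reducedTheta {m : ℕ} (Q : Matrix (Fin (m + 1)) (Fin (m + 1)) ℝ) :
    Matrix (Fin m) (Fin m) ℝ :=
  (thetaOf Q).submatrix Fin.castSucc Fin.castSucc

section Theta

variable {d : ℕ}

theorem thetaOf_eq_incidence {Q : Matrix (Fin d) (Fin d) ℝ} (hQ : Q.IsSymm) :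
    thetaOf Q = (incidence (Fin d))ᵀ * diagonal (edgeWeight Q) * incidence (Fin d) := by
  ext k l
  set g : Fin d → Fin d → ℝ := fun x y => Q x y *
    (((if k = x then 1 else 0) - if k = y then 1 else 0) *
      ((if l = x then 1 else 0) - if l = y then 1 else 0)) with hg
  have hlhs : thetaOf Q k l = (if k = l then ∑ y, Q k y else 0) - Q k l := by
    by_cases h : k = l
    · subst h
      simp [thetaOf, filter_ne', sum_erase_eq_sub]
    · simp [thetaOf, h]
  have hrhs : ((incidence (Fin d))ᵀ * diagonal (edgeWeight Q) * incidence (Fin d)) k l =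
      ∑ x, ∑ y, (if x < y then g x y else 0) := by
    rw [mul_apply]
    simp only [mul_diagonal, transpose_apply, Fintype.sum_prod_type, incidence, edgeWeight,
      of_apply, hg]
    refine sum_congr rfl fun x _ => sum_congr rfl fun y _ => ?_
    split_ifs <;> ring
  have hfull : ∑ x, ∑ y, g x y = 2 * ((if k = l then ∑ y, Q k y else 0) - Q k l) := by
    simp only [hg, mul_sub, mul_ite, mul_one, mul_zero, sum_sub_distrib]
    simp only [sum_ite_irrel, sum_sub_distrib, sum_const_zero, sum_ite_eq, mem_univ, ↓reduceIte]
    split_ifs with h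
    · subst h
      rw [sum_congr rfl fun x _ => hQ.apply k x]
      ring
    · rw [hQ.apply k l]
      ring
  have hhalf := two_mul_sum_sum_ite_lt g (fun x y => by simp only [hg, hQ.apply x y]; ring)
    (fun x => by simp [hg])
  linarith

lemma thetaOf_mulVec_one (Q : Matrix (Fin d) (Fin d) ℝ) : thetaOf Q *ᵥ (fun _ => 1) = 0 := by
  ext i
  simp only [mulVec, dotProduct, thetaOf, of_apply, mul_one, Pi.zero_apply]
  rw [sum_ite, filter_eq univ i, if_pos (mem_univ i), sum_singleton, sum_neg_distrib]
  simp [eq_comm]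

lemma isSymm_thetaOf {Q : Matrix (Fin d) (Fin d) ℝ} (hQ : Q.IsSymm) : (thetaOf Q).IsSymm := by
  ext i j
  by_cases h : i = j
  · subst h
    rfl
  · simp [thetaOf, h, Ne.symm h, hQ.apply i j]

lemma thetaOf_add_smul (a b : ℝ) (Q₁ Q₂ : Matrix (Fin d) (Fin d) ℝ) :
    thetaOf (a • Q₁ + b • Q₂) = a • thetaOf Q₁ + b • thetaOf Q₂ := by
  ext i j
  by_cases h : i = j
  · simp [thetaOf, h, sum_add_distrib, mul_sum]
  · simp [thetaOf, h]
    ring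

end Theta

section EdgePairs

variable {d : ℕ}

lemma edgePairs_injective : Function.Injective (edgePairs (d := d)) := by
  intro G H h
  have key : ∀ u v, u < v → (G.Adj u v ↔ H.Adj u v) := fun u v huv => by
    simpa [edgePairs, huv] using congrArg ((u, v) ∈ ·) h
  ext u v
  rcases lt_trichotomy u v with huv | rfl | huv
  · exact key u v huv
  · simp
  · rw [G.adj_comm, H.adj_comm]
    exact key v u huv

lemma card_edgePairs (G : SimpleGraph (Fin d)) : #(edgePairs G) = Nat.card G.edgeSet := by
  classical
  have himage : G.edgeFinset = (edgePairs G).image fun p => s(p.1, p.2) := by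
    ext e
    induction e using Sym2.ind with
    | _ u v =>
      simp only [SimpleGraph.mem_edgeFinset, SimpleGraph.mem_edgeSet, mem_image, edgePairs,
        mem_filter, mem_univ, true_and, Prod.exists, Sym2.eq_iff]
      constructor
      · intro h
        rcases lt_trichotomy u v with huv | rfl | huv
        · exact ⟨u, v, ⟨huv, h⟩, .inl ⟨rfl, rfl⟩⟩
        · exact absurd h (G.loopless.irrefl u)
        · exact ⟨v, u, ⟨huv, h.symm⟩, .inr ⟨rfl, rfl⟩⟩
      · rintro ⟨a, b, ⟨-, hab⟩, ⟨rfl, rfl⟩ | ⟨rfl, rfl⟩⟩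
        exacts [hab, hab.symm]
  rw [Nat.card_eq_fintype_card, ← SimpleGraph.edgeFinset_card, himage, card_image_of_injOn]
  rintro ⟨a, b⟩ hab ⟨c, e⟩ hce h
  simp only [edgePairs, coe_filter, mem_univ, true_and, Set.mem_ofPred_eq] at hab hce
  rcases Sym2.eq_iff.mp h with ⟨rfl, rfl⟩ | ⟨rfl, rfl⟩
  · rfl
  · exact absurd (hab.1.trans hce.1) (lt_irrefl _)

lemma edgePairs_edgeGraph {ι : Type*} [Fintype ι] {f : ι → Fin d × Fin d}
    (hf : ∀ i, (f i).1 < (f i).2) : edgePairs (edgeGraph f) = univ.image f := by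
  ext p
  simp only [edgePairs, edgeGraph, SimpleGraph.fromEdgeSet_adj, Set.mem_range, mem_filter,
    mem_univ, true_and, mem_image, Sym2.eq_iff]
  constructor
  · rintro ⟨hlt, ⟨i, ⟨h1, h2⟩ | ⟨h1, h2⟩⟩, -⟩
    · exact ⟨i, Prod.ext h1 h2⟩
    · exact absurd ((hf i).trans (h2 ▸ h1 ▸ hlt)) (lt_irrefl _)
  · rintro ⟨i, rfl⟩
    exact ⟨hf i, ⟨i, .inl ⟨rfl, rfl⟩⟩, (hf i).ne⟩

lemma isTree_edgeGraph_iff {m : ℕ} {f : Fin m → Fin (m + 1) × Fin (m + 1)}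
    (hf : ∀ a, (f a).1 < (f a).2) (hinj : f.Injective) :
    (edgeGraph f).IsTree ↔ (edgeGraph f).Connected := by
  rw [SimpleGraph.isTree_iff_connected_and_card, ← card_edgePairs, edgePairs_edgeGraph hf,
    card_image_of_injective _ hinj]
  simp

end EdgePairs

section Incidence

variable {m : ℕ}

lemma reducedIncidence_submatrix_mulVec (f : Fin m → Fin (m + 1) × Fin (m + 1))
    (y : Fin m → ℝ) (a : Fin m) :
    ((reducedIncidence m).submatrix f id *ᵥ y) a =
      (Fin.snoc y 0 : Fin (m + 1) → ℝ) (f a).1 - (Fin.snoc y 0 : Fin (m + 1) → ℝ) (f a).2 := by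
  have hsnoc : ∀ v : Fin (m + 1),
      ∑ b : Fin m, (if b.castSucc = v then y b else 0) = (Fin.snoc y 0 : Fin (m + 1) → ℝ) v := by
    intro v
    induction v using Fin.lastCases <;> simp [Fin.castSucc_ne_last]
  simp [mulVec, dotProduct, reducedIncidence, incidence, sub_mul, sum_sub_distrib, ite_mul,
    hsnoc]

lemma det_reducedIncidence_submatrix_mem_range_signType
    (f : Fin m → Fin (m + 1) × Fin (m + 1)) :
    ((reducedIncidence m).submatrix f id).det ∈ Set.range SignType.cast := by
  refine det_mem_range_signType_of_rows _ fun a => ?_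
  obtain ⟨p, hp⟩ := (some (f a).1).exists_eq_some_iff_eq_some_succAbove (Fin.last m)
  obtain ⟨q, hq⟩ := (some (f a).2).exists_eq_some_iff_eq_some_succAbove (Fin.last m)
  exact ⟨p, q, fun j => by simp [reducedIncidence, incidence, hp, hq, eq_comm]⟩

theorem connected_of_det_reducedIncidence_submatrix_ne_zero
    {f : Fin m → Fin (m + 1) × Fin (m + 1)} (hdet : ((reducedIncidence m).submatrix f id).det ≠ 0) :
    (edgeGraph f).Connected := by
  classical
  by_contra hconn
  obtain ⟨u, hu⟩ : ∃ u, ¬(edgeGraph f).Reachable u (Fin.last m) := by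
    by_contra! h
    exact hconn ⟨fun a b => (h a).trans (h b).symm⟩
  -- the indicator of the component of `u` vanishes at the last vertex and lies in the kernel
  set x : Fin (m + 1) → ℝ := fun v => if (edgeGraph f).Reachable u v then 1 else 0
  have hsnoc : (Fin.snoc (fun b => x b.castSucc) 0 : Fin (m + 1) → ℝ) = x := by
    funext v
    induction v using Fin.lastCases <;> simp [x, hu]
  refine hdet (exists_mulVec_eq_zero_iff.mp ⟨fun b => x b.castSucc, fun h0 => ?_, ?_⟩)
  · obtain ⟨b, rfl⟩ := Fin.exists_castSucc_eq.mpr (fun h => hu (h ▸ .refl _))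
    simpa [x] using congrFun h0 b
  · ext a
    rw [reducedIncidence_submatrix_mulVec, hsnoc, Pi.zero_apply, sub_eq_zero]
    by_cases hloop : (f a).1 = (f a).2
    · rw [hloop]
    have hadj : (edgeGraph f).Adj (f a).1 (f a).2 :=
      (SimpleGraph.fromEdgeSet_adj _).mpr ⟨⟨a, rfl⟩, hloop⟩
    have hiff : (edgeGraph f).Reachable u (f a).1 ↔ (edgeGraph f).Reachable u (f a).2 :=
      ⟨fun h => h.trans hadj.reachable, fun h => h.trans hadj.symm.reachable⟩
    simp only [x, hiff]

theorem det_reducedIncidence_submatrix_ne_zero {f : Fin m → Fin (m + 1) × Fin (m + 1)}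
    (hconn : (edgeGraph f).Connected) : ((reducedIncidence m).submatrix f id).det ≠ 0 := by
  rw [Ne, ← exists_mulVec_eq_zero_iff]
  rintro ⟨y, hy0, hy⟩
  -- extended by `0` at the last vertex, a kernel vector is constant along edges
  set x : Fin (m + 1) → ℝ := Fin.snoc y 0
  have hadj : ∀ u v, (edgeGraph f).Adj u v → x u = x v := by
    intro u v huv
    obtain ⟨⟨a, ha⟩, -⟩ := (SimpleGraph.fromEdgeSet_adj _).mp huv
    have hedge := congrFun hy a
    rw [reducedIncidence_submatrix_mulVec, Pi.zero_apply, sub_eq_zero] at hedge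
    rcases Sym2.eq_iff.mp ha with ⟨h1, h2⟩ | ⟨h1, h2⟩
    · rw [← h1, ← h2]
      exact hedge
    · rw [← h1, ← h2]
      exact hedge.symm
  apply hy0
  funext b
  simpa [x] using (hconn.preconnected b.castSucc (Fin.last m)).apply_eq_of_forall_adj hadj

lemma sq_det_reducedIncidence_submatrix {g : Fin m → Fin (m + 1) × Fin (m + 1)}
    (hg : (edgeGraph g).Connected) : ((reducedIncidence m).submatrix g id).det ^ 2 = 1 := by
  obtain ⟨s, hs⟩ := det_reducedIncidence_submatrix_mem_range_signType g
  have hne := det_reducedIncidence_submatrix_ne_zero hg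
  rw [← hs] at hne ⊢
  cases s <;> simp at hne ⊢

end Incidence

section MatrixTree

variable {m : ℕ}

lemma reducedTheta_eq {Q : Matrix (Fin (m + 1)) (Fin (m + 1)) ℝ} (hQ : Q.IsSymm) :
    reducedTheta Q = (reducedIncidence m)ᵀ * diagonal (edgeWeight Q) * reducedIncidence m := by
  ext a b
  simp [reducedTheta, thetaOf_eq_incidence hQ, reducedIncidence, mul_apply]

-- The lexicographic order on pairs is only used to enumerate edge sets in Cauchy–Binet.
lemma det_reducedTheta_eq_sum {Q : Matrix (Fin (m + 1)) (Fin (m + 1)) ℝ} (hQ : Q.IsSymm) :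
    (reducedTheta Q).det = ∑ f : Fin m → Fin (m + 1) ×ₗ Fin (m + 1) with StrictMono f,
      (∏ a, edgeWeight Q (ofLex (f a))) *
        ((reducedIncidence m).submatrix (ofLex ∘ f) id).det ^ 2 := by
  rw [reducedTheta_eq hQ]
  refine (det_mul_eq_sum_strictMono (ι := Fin (m + 1) ×ₗ Fin (m + 1)) _ _).trans
    (sum_congr rfl fun f _ => ?_)
  set L := (reducedIncidence m).submatrix (ofLex ∘ f) id
  have hsub : ((reducedIncidence m)ᵀ * diagonal (edgeWeight Q)).submatrix id (ofLex ∘ f) =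
      Lᵀ * diagonal fun a => edgeWeight Q (ofLex (f a)) := by
    ext a b
    simp [L, mul_diagonal]
  change (((reducedIncidence m)ᵀ * diagonal (edgeWeight Q)).submatrix id (ofLex ∘ f)).det *
    L.det = _
  rw [hsub, det_mul, det_transpose, det_diagonal]
  ring

lemma forall_lt_of_prod_edgeWeight_ne_zero {ι : Type*} [Fintype ι]
    {Q : Matrix (Fin (m + 1)) (Fin (m + 1)) ℝ} {g : ι → Fin (m + 1) × Fin (m + 1)}
    (h : ∏ i, edgeWeight Q (g i) ≠ 0) (i : ι) : (g i).1 < (g i).2 := by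
  by_contra hlt
  exact h (prod_eq_zero (mem_univ i) (if_neg hlt))

lemma prod_edgeWeight_eq_prod_edgePairs {ι : Type*} [Fintype ι]
    (Q : Matrix (Fin (m + 1)) (Fin (m + 1)) ℝ) {g : ι → Fin (m + 1) × Fin (m + 1)}
    (hg : ∀ i, (g i).1 < (g i).2) (hinj : g.Injective) :
    ∏ i, edgeWeight Q (g i) = ∏ p ∈ edgePairs (edgeGraph g), Q p.1 p.2 := by
  rw [edgePairs_edgeGraph hg, prod_image fun i _ j _ h => hinj h]
  exact prod_congr rfl fun i _ => if_pos (hg i)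

lemma strictMono_eq_of_edgeGraph_eq {f₁ f₂ : Fin m → Fin (m + 1) ×ₗ Fin (m + 1)}
    (hf₁ : StrictMono f₁) (hf₂ : StrictMono f₂) (h₁ : ∀ a, (ofLex (f₁ a)).1 < (ofLex (f₁ a)).2)
    (h₂ : ∀ a, (ofLex (f₂ a)).1 < (ofLex (f₂ a)).2)
    (h : edgeGraph (ofLex ∘ f₁) = edgeGraph (ofLex ∘ f₂)) : f₁ = f₂ := by
  have himage := congrArg edgePairs h
  rw [edgePairs_edgeGraph (f := ofLex ∘ f₁) h₁, edgePairs_edgeGraph (f := ofLex ∘ f₂) h₂]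
    at himage
  have hrange : Set.range (ofLex ∘ f₁) = Set.range (ofLex ∘ f₂) := by
    ext p
    simpa using congrArg (p ∈ ·) himage
  rw [Set.range_comp, Set.range_comp] at hrange
  exact (hf₁.range_inj hf₂).mp (Set.image_injective.mpr ofLex.injective hrange)

lemma exists_strictMono_edgeGraph_eq {T : SimpleGraph (Fin (m + 1))} (hT : T.IsTree) :
    ∃ f : Fin m → Fin (m + 1) ×ₗ Fin (m + 1), StrictMono f ∧
      (∀ a, (ofLex (f a)).1 < (ofLex (f a)).2) ∧ edgeGraph (ofLex ∘ f) = T := by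
  classical
  set S := (edgePairs T).map toLex.toEmbedding
  have hS : #S = m := by
    have := (SimpleGraph.isTree_iff_connected_and_card.mp hT).2
    simp only [Nat.card_eq_fintype_card, Fintype.card_fin] at this
    rw [card_map, card_edgePairs, Nat.card_eq_fintype_card]
    omega
  set f := S.orderEmbOfFin hS
  have hmem : ∀ a, ofLex (f a) ∈ edgePairs T := fun a => by
    simpa [S] using S.orderEmbOfFin_mem hS a
  have hlt : ∀ a, (ofLex (f a)).1 < (ofLex (f a)).2 := fun a => by
    simpa [edgePairs] using (mem_filter.mp (hmem a)).2.1
  refine ⟨f, f.strictMono, hlt, edgePairs_injective ?_⟩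
  rw [edgePairs_edgeGraph (f := ofLex ∘ f) hlt]
  ext p
  simp only [mem_image, mem_univ, true_and, Function.comp_apply]
  constructor
  · rintro ⟨a, rfl⟩
    exact hmem a
  · intro hp
    obtain ⟨a, ha⟩ : toLex p ∈ Set.range f := by
      rw [range_orderEmbOfFin]
      simpa [S] using hp
    exact ⟨a, by rw [ha]; rfl⟩

theorem tau_eq_det_reducedTheta {Q : Matrix (Fin (m + 1)) (Fin (m + 1)) ℝ} (hQ : Q.IsSymm) :
    tau Q = (reducedTheta Q).det := by
  classical
  rw [det_reducedTheta_eq_sum hQ]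
  symm
  have hsupp : ∀ f : Fin m → Fin (m + 1) ×ₗ Fin (m + 1),
      (∏ a, edgeWeight Q (ofLex (f a))) * ((reducedIncidence m).submatrix (ofLex ∘ f) id).det ^ 2
        ≠ 0 → (∀ a, (ofLex (f a)).1 < (ofLex (f a)).2) ∧ (edgeGraph (ofLex ∘ f)).Connected :=
    fun f h => ⟨forall_lt_of_prod_edgeWeight_ne_zero (left_ne_zero_of_mul h),
      connected_of_det_reducedIncidence_submatrix_ne_zero
        ((pow_ne_zero_iff two_ne_zero).mp (right_ne_zero_of_mul h))⟩
  have hval : ∀ f : Fin m → Fin (m + 1) ×ₗ Fin (m + 1), StrictMono f →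
      (∀ a, (ofLex (f a)).1 < (ofLex (f a)).2) → (edgeGraph (ofLex ∘ f)).Connected →
      (∏ a, edgeWeight Q (ofLex (f a))) * ((reducedIncidence m).submatrix (ofLex ∘ f) id).det ^ 2
        = ∏ p ∈ edgePairs (edgeGraph (ofLex ∘ f)), Q p.1 p.2 := fun f hf hlt hconn => by
    have hprod := prod_edgeWeight_eq_prod_edgePairs Q (g := ofLex ∘ f) hlt
      (ofLex.injective.comp hf.injective)
    simp only [Function.comp_apply] at hprod
    rw [hprod, sq_det_reducedIncidence_submatrix hconn, mul_one]
  refine sum_bij_ne_zero (fun f _ _ => edgeGraph (ofLex ∘ f)) ?_ ?_ ?_ ?_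
  · intro f hf hne
    obtain ⟨hlt, hconn⟩ := hsupp f hne
    refine mem_filter.mpr ⟨mem_univ _, (isTree_edgeGraph_iff (f := ofLex ∘ f) hlt ?_).mpr hconn⟩
    exact ofLex.injective.comp (mem_filter.mp hf).2.injective
  · intro f₁ hf₁ hne₁ f₂ hf₂ hne₂ h
    exact strictMono_eq_of_edgeGraph_eq (mem_filter.mp hf₁).2 (mem_filter.mp hf₂).2
      (hsupp f₁ hne₁).1 (hsupp f₂ hne₂).1 h
  · intro T hT hne
    obtain ⟨f, hf, hlt, rfl⟩ := exists_strictMono_edgeGraph_eq (mem_filter.mp hT).2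
    refine ⟨f, mem_filter.mpr ⟨mem_univ _, hf⟩, ?_, rfl⟩
    rwa [hval f hf hlt (mem_filter.mp hT).2.connected]
  · intro f hf hne
    exact hval f (mem_filter.mp hf).2 (hsupp f hne).1 (hsupp f hne).2

end MatrixTree

section ReducedTheta

variable {m : ℕ}

theorem reducedTheta_posDef {Q : Matrix (Fin (m + 1)) (Fin (m + 1)) ℝ} (hQ : memQ Q) :
    (reducedTheta Q).PosDef := by
  obtain ⟨hsymm, -, hpos⟩ := hQ
  refine .of_dotProduct_mulVec_pos ((isSymm_thetaOf hsymm).submatrix _) fun x hx => ?_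
  -- extend `x` by `0` and centre it; `Θ(Q)` does not see constants
  set z : Fin (m + 1) → ℝ := Fin.snoc x 0
  set c := (∑ i, z i) / (m + 1)
  set w : Fin (m + 1) → ℝ := z - fun _ => c
  have hsum : ∑ i, w i = 0 := by
    simp only [w, Pi.sub_apply, sum_sub_distrib, sum_const, card_univ, Fintype.card_fin,
      nsmul_eq_mul, c]
    push_cast
    field_simp
    ring
  have hne : w ≠ 0 := by
    intro h
    have hzc : ∀ i, z i = c := fun i => sub_eq_zero.mp (congrFun h i)
    have hc : c = 0 := by simpa [z] using (hzc (Fin.last m)).symm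
    exact hx (funext fun a => by simpa [z, hc] using hzc a.castSucc)
  rw [star_trivial, reducedTheta, dotProduct_submatrix_castSucc_mulVec,
    ← dotProduct_mulVec_sub_const (thetaOf_mulVec_one Q) ?_ z c]
  · exact hpos _ hne hsum
  · rw [← mulVec_transpose, (isSymm_thetaOf hsymm).eq, thetaOf_mulVec_one]

lemma reducedTheta_add_smul (a b : ℝ) (Q₁ Q₂ : Matrix (Fin (m + 1)) (Fin (m + 1)) ℝ) :
    reducedTheta (a • Q₁ + b • Q₂) = a • reducedTheta Q₁ + b • reducedTheta Q₂ := by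
  ext i j
  simp [reducedTheta, thetaOf_add_smul]

lemma eq_zero_of_reducedTheta_eq_zero {Q : Matrix (Fin (m + 1)) (Fin (m + 1)) ℝ}
    (hsymm : Q.IsSymm) (hdiag : ∀ i, Q i i = 0) (h : reducedTheta Q = 0) : Q = 0 := by
  have hoff : ∀ a b : Fin m, a ≠ b → Q a.castSucc b.castSucc = 0 := fun a b hab => by
    simpa [reducedTheta, thetaOf, hab] using congrFun (congrFun h a) b
  have hlast : ∀ a : Fin m, Q a.castSucc (Fin.last m) = 0 := fun a => by
    have hrow := congrFun (thetaOf_mulVec_one Q) a.castSucc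
    have hsub : ∀ b : Fin m, thetaOf Q a.castSucc b.castSucc = 0 := fun b =>
      congrFun (congrFun h a) b
    simp only [mulVec, dotProduct, mul_one, Fin.sum_univ_castSucc, Pi.zero_apply, hsub,
      sum_const_zero, zero_add] at hrow
    simpa [thetaOf, Fin.castSucc_ne_last] using hrow
  ext i j
  induction i using Fin.lastCases <;> induction j using Fin.lastCases
  · exact hdiag _
  · rw [hsymm.apply]
    exact hlast _
  · exact hlast _
  · rename_i a b
    by_cases hab : a = b
    · subst hab
      exact hdiag _
    · exact hoff a b hab

lemma reducedTheta_injOn : Set.InjOn (reducedTheta (m := m)) {Q | memQ Q} := by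
  intro Q₁ h₁ Q₂ h₂ h
  have hsub : reducedTheta (Q₁ - Q₂) = 0 := by
    have := reducedTheta_add_smul 1 (-1) Q₁ Q₂
    simp only [one_smul, neg_smul, ← sub_eq_add_neg] at this
    rwa [h, sub_self] at this
  exact sub_eq_zero.mp (eq_zero_of_reducedTheta_eq_zero (h₁.1.sub h₂.1)
    (fun i => by simp [h₁.2.1 i, h₂.2.1 i]) hsub)

end ReducedTheta

theorem convex_setOf_memQ {d : ℕ} : Convex ℝ {Q : Matrix (Fin d) (Fin d) ℝ | memQ Q} := by
  intro Q₁ h₁ Q₂ h₂ a b ha hb hab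
  refine ⟨(h₁.1.smul a).add (h₂.1.smul b), fun i => by simp [h₁.2.1 i, h₂.2.1 i],
    fun x hx hsum => ?_⟩
  rw [thetaOf_add_smul, add_mulVec, smul_mulVec, smul_mulVec, dotProduct_add, dotProduct_smul,
    dotProduct_smul, smul_eq_mul, smul_eq_mul]
  have p₁ := h₁.2.2 x hx hsum
  have p₂ := h₂.2.2 x hx hsum
  rcases ha.eq_or_lt with rfl | ha
  · simp only [zero_add] at hab
    simp [hab, p₂]
  · nlinarith

theorem strictConcaveOn_log_tau {m : ℕ} :
    StrictConcaveOn ℝ {Q : Matrix (Fin (m + 1)) (Fin (m + 1)) ℝ | memQ Q}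
      fun Q => Real.log (tau Q) := by
  refine ⟨convex_setOf_memQ, fun Q₁ h₁ Q₂ h₂ hne a b ha hb hab => ?_⟩
  have hmem : memQ (a • Q₁ + b • Q₂) := convex_setOf_memQ h₁ h₂ ha.le hb.le hab
  simp only [tau_eq_det_reducedTheta h₁.1, tau_eq_det_reducedTheta h₂.1,
    tau_eq_det_reducedTheta hmem.1, reducedTheta_add_smul]
  exact strictConcaveOn_log_det.2 (reducedTheta_posDef h₁) (reducedTheta_posDef h₂)
    (fun h => hne (reducedTheta_injOn h₁ h₂ h)) ha hb hab

/-- `τ(Q) > 0` on `𝒬`, the set `𝒬` is convex, and `Q ↦ log τ(Q)` is strictly concave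
on `𝒬`. -/
theorem log_tau_strictly_concave {d : ℕ} (hd : 0 < d) :
    (∀ Q : Matrix (Fin d) (Fin d) ℝ, memQ Q → 0 < tau Q) ∧
    (∀ Q₁ Q₂ : Matrix (Fin d) (Fin d) ℝ, memQ Q₁ → memQ Q₂ →
      ∀ t : ℝ, 0 ≤ t → t ≤ 1 → memQ (t • Q₁ + (1 - t) • Q₂)) ∧
    (∀ Q₁ Q₂ : Matrix (Fin d) (Fin d) ℝ, memQ Q₁ → memQ Q₂ → Q₁ ≠ Q₂ →
      ∀ t : ℝ, 0 < t → t < 1 →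
        t * Real.log (tau Q₁) + (1 - t) * Real.log (tau Q₂) <
          Real.log (tau (t • Q₁ + (1 - t) • Q₂))) := by
  obtain ⟨m, rfl⟩ : ∃ m, d = m + 1 := Nat.exists_eq_add_one.mpr hd
  refine ⟨fun Q hQ => ?_, fun Q₁ Q₂ h₁ h₂ t ht₀ ht₁ => ?_, fun Q₁ Q₂ h₁ h₂ hne t ht₀ ht₁ => ?_⟩
  · rw [tau_eq_det_reducedTheta hQ.1]
    exact (reducedTheta_posDef hQ).det_pos
  · exact convex_setOf_memQ h₁ h₂ ht₀ (by linarith) (by ring)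
  · exact strictConcaveOn_log_tau.2 h₁ h₂ hne ht₀ (by linarith) (by ring)
end
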